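/- For all n ∈ ℕ and all 0 ≤ i, j ≤ n, there is a bijection f from Q^I_{i,j} onto P^{L_n}_{i,j} such that for every α ∈ Q^I_{i,j}, the weight of the path f(α) equals ∏_{r=j}^{i−1} t_{r+1, α_{i−r}}. -/

import Mathlib

/-- The heights of an `L^m_n`-path of order `n` (the abscissas `x i = m + i` are
determined, so only the heights `y i ∈ {0, …, n}`, encoded as `Fin (n+1)`, are recorded):
`y (k+1) ∈ {y k, y k - 1}` and a fall step at position `k` forces `y k ≥ n - k`. -/
def IsLPath (n : ℕ) (y : Fin (n + 1) → Fin (n + 1)) : Prop :=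
  ∀ k : Fin n,
    ((y k.succ = y k.castSucc ∨ (y k.succ : ℕ) + 1 = (y k.castSucc : ℕ)) ∧
      ((y k.succ : ℕ) + 1 = (y k.castSucc : ℕ) → n - (k : ℕ) ≤ (y k.castSucc : ℕ)))

/-- The weight of an `L`-type path: a fall step from `(k, j)` to `(k+1, j-1)` has weight
`t j (k + j - n)` and a horizontal step has weight `1`; the weight of the path is the
product of the weights of its steps. -/
def lweight {R : Type*} [CommRing R] (n : ℕ) (t : ℕ → ℕ → R)
    (y : Fin (n + 1) → Fin (n + 1)) : R :=
  ∏ k : Fin n,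
    if (y k.succ : ℕ) + 1 = (y k.castSucc : ℕ)
    then t (y k.castSucc : ℕ) ((k : ℕ) + (y k.castSucc : ℕ) - n) else 1

open scoped Classical in
/-- `Q^I_{i,j}`: for `i ≥ j`, the weakly increasing sequences `α₁ ≤ … ≤ α_{i-j}` of
nonnegative integers with `αᵣ ≤ i - r` (here zero-indexed, so `α k ≤ i - (k+1)`; the
values are encoded in `Fin (i+1)`); for `i = j` only the empty sequence, and for `i < j`
the empty set. -/
noncomputable def QIset (i j : ℕ) : Finset (Fin (i - j) → Fin (i + 1)) :=
  if j ≤ i then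
    Finset.univ.filter
      (fun α => Monotone α ∧ ∀ r : Fin (i - j), (α r : ℕ) ≤ i - ((r : ℕ) + 1))
  else ∅

/-! The path attached to `α ∈ Q^I_{i,j}` makes its `q`-th fall, from height `i - q`, at step
`n - i + q + α q`. The weight of that fall is `t (i - q) (α q)`, the L-condition there reads
`α q ≥ 0`, the fall happens before step `n` exactly when `α q ≤ i - q - 1`, and the fall steps
strictly increase exactly when `α` is weakly increasing. Conversely, a path falls from height
`v` at the number of steps after which it is still at height `≥ v`, which recovers `α`; both
directions come down to counting lower sets of `Fin N`. -/

open Finset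

section Counting

variable {N : ℕ}

theorem Fin.lt_card_filter_iff_of_antitone {P : Fin N → Prop} [DecidablePred P]
    (hP : Antitone P) (a : Fin N) : (a : ℕ) < #{b | P b} ↔ P a := by
  constructor
  · intro h
    by_contra ha
    have hsub : ({b | P b} : Finset (Fin N)) ⊆ Iio a := fun b hb => by
      simp only [mem_filter, mem_univ, true_and, mem_Iio] at hb ⊢
      by_contra hab
      exact ha (hP (not_lt.1 hab) hb)
    have := card_le_card hsub
    rw [Fin.card_Iio] at this
    omega
  · intro ha
    have hsub : Iic a ⊆ ({b | P b} : Finset (Fin N)) := fun b hb => by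
      simp only [mem_filter, mem_univ, true_and, mem_Iic] at hb ⊢
      exact hP hb ha
    have := card_le_card hsub
    rw [Fin.card_Iic] at this
    omega

theorem Fin.card_filter_eq_of_iff {P : Fin N → Prop} [DecidablePred P] {c : ℕ} (hc : c ≤ N)
    (h : ∀ a : Fin N, P a ↔ (a : ℕ) < c) : #{a | P a} = c := by
  rw [filter_congr fun a _ => h a, Fin.card_filter_val_lt, min_eq_right hc]

variable {d : ℕ} {k : Fin d → ℕ}

theorem StrictMono.card_filter_lt_apply (hk : StrictMono k) (p : Fin d) :
    #{q | k q < k p} = p :=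
  Fin.card_filter_eq_of_iff p.isLt.le fun _ => hk.lt_iff_lt

theorem StrictMono.card_filter_lt_apply_add_one (hk : StrictMono k) (p : Fin d) :
    #{q | k q < k p + 1} = p + 1 :=
  Fin.card_filter_eq_of_iff p.isLt fun q => by
    rw [Nat.lt_add_one_iff, hk.le_iff_le, Fin.le_iff_val_le_val, Nat.lt_add_one_iff]

theorem card_filter_lt_add_one_of_notMem_range {m : ℕ} (hm : m ∉ Set.range k) :
    #{q | k q < m + 1} = #{q | k q < m} := by
  refine congrArg card (filter_congr fun q _ => ?_)
  have : k q ≠ m := fun h => hm ⟨q, h⟩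
  omega

end Counting

theorem mem_QIset {i j : ℕ} {α : Fin (i - j) → Fin (i + 1)} :
    α ∈ QIset i j ↔ j ≤ i ∧ Monotone α ∧ ∀ q, (α q : ℕ) + q < i := by
  unfold QIset
  split_ifs with hji
  · simp only [mem_filter, mem_univ, true_and, hji]
    refine and_congr_right fun _ => forall_congr' fun q => ?_
    have := q.isLt
    omega
  · simp [hji]

section SeqToPath

variable {n d : ℕ}

def seqFallStep (n i : ℕ) (α : Fin d → Fin (i + 1)) (q : Fin d) : ℕ :=
  n - i + q + α q

def pathOfSeq (i : Fin (n + 1)) (α : Fin d → Fin (i + 1)) : Fin (n + 1) → Fin (n + 1) :=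
  fun m => ⟨i - #{q | seqFallStep n i α q < m}, lt_of_le_of_lt (Nat.sub_le _ _) i.isLt⟩

variable {i : Fin (n + 1)} {α : Fin d → Fin (i + 1)}

theorem seqFallStep_strictMono (hα : Monotone α) : StrictMono (seqFallStep n i α) := by
  intro q q' h
  have : (α q : ℕ) ≤ α q' := hα h.le
  have : (q : ℕ) < q' := h
  unfold seqFallStep
  omega

theorem seqFallStep_lt (hb : ∀ q, (α q : ℕ) + q < i) (q : Fin d) :
    seqFallStep n i α q < n := by
  have := hb q
  have := i.isLt
  unfold seqFallStep
  omega

theorem pathOfSeq_zero : pathOfSeq i α 0 = i := by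
  ext
  simp [pathOfSeq]

theorem pathOfSeq_last (hb : ∀ q, (α q : ℕ) + q < i) :
    (pathOfSeq i α (Fin.last n) : ℕ) = i - d := by
  simp [pathOfSeq, filter_true_of_mem fun q _ => seqFallStep_lt hb q]

theorem pathOfSeq_fall (hα : Monotone α) (q : Fin d) (k : Fin n)
    (hk : (k : ℕ) = seqFallStep n i α q) :
    (pathOfSeq i α k.castSucc : ℕ) = i - q ∧ (pathOfSeq i α k.succ : ℕ) = i - (q + 1) := by
  simp only [pathOfSeq, Fin.val_castSucc, Fin.val_succ, hk,
    (seqFallStep_strictMono hα).card_filter_lt_apply,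
    (seqFallStep_strictMono hα).card_filter_lt_apply_add_one, and_self]

theorem pathOfSeq_flat (k : Fin n) (hk : (k : ℕ) ∉ Set.range (seqFallStep n i α)) :
    pathOfSeq i α k.succ = pathOfSeq i α k.castSucc := by
  ext
  simp only [pathOfSeq, Fin.val_castSucc, Fin.val_succ, card_filter_lt_add_one_of_notMem_range hk]

theorem isLPath_pathOfSeq (hα : Monotone α) (hb : ∀ q, (α q : ℕ) + q < i) :
    IsLPath n (pathOfSeq i α) := by
  intro k
  by_cases hk : (k : ℕ) ∈ Set.range (seqFallStep n i α)
  · obtain ⟨q, hq⟩ := hk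
    obtain ⟨h₀, h₁⟩ := pathOfSeq_fall hα q k hq.symm
    have := hb q
    have := i.isLt
    unfold seqFallStep at hq
    refine ⟨Or.inr ?_, fun _ => ?_⟩ <;> omega
  · have h := pathOfSeq_flat k hk
    refine ⟨Or.inl h, fun h' => ?_⟩
    rw [h] at h'
    omega

theorem lweight_pathOfSeq {R : Type*} [CommRing R] (t : ℕ → ℕ → R) (hα : Monotone α)
    (hb : ∀ q, (α q : ℕ) + q < i) :
    lweight n t (pathOfSeq i α) = ∏ q : Fin d, t (i - q) (α q) := by
  symm
  refine Fintype.prod_of_injective (fun q => ⟨seqFallStep n i α q, seqFallStep_lt hb q⟩)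
    (fun q q' h => (seqFallStep_strictMono hα).injective (congrArg Fin.val h)) _ _ ?_ ?_
  · intro k hk
    have hk' : (k : ℕ) ∉ Set.range (seqFallStep n i α) :=
      fun ⟨q, hq⟩ => hk ⟨q, Fin.ext hq⟩
    rw [if_neg (by rw [pathOfSeq_flat k hk']; omega)]
  · intro q
    obtain ⟨h₀, h₁⟩ := pathOfSeq_fall hα q ⟨_, seqFallStep_lt hb q⟩ rfl
    have := hb q
    have := i.isLt
    rw [h₀, h₁, if_pos (by omega)]
    congr 1
    simp only [seqFallStep]
    omega

end SeqToPath

section PathToSeq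

variable {n : ℕ} {y : Fin (n + 1) → Fin (n + 1)}

theorem IsLPath.antitone (hy : IsLPath n y) : Antitone y :=
  Fin.antitone_iff_succ_le.2 fun k => by
    rcases (hy k).1 with h | h
    · exact h.le
    · rw [Fin.le_iff_val_le_val]
      omega

theorem IsLPath.monotone_val_add (hy : IsLPath n y) : Monotone fun m => (y m : ℕ) + m :=
  Fin.monotone_iff_le_succ.2 fun k => by
    simp only [Fin.val_castSucc, Fin.val_succ]
    rcases (hy k).1 with h | h
    · rw [h]
      omega
    · omega

/-- The step at which the path falls from height `v`. -/
def pathFallStep (y : Fin (n + 1) → Fin (n + 1)) (v : ℕ) : ℕ :=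
  #{m : Fin n | v ≤ y m.succ}

theorem pathFallStep_le (v : ℕ) : pathFallStep y v ≤ n :=
  (card_filter_le _ _).trans_eq (card_fin n)

theorem pathFallStep_mono {v v' : ℕ} (h : v' ≤ v) : pathFallStep y v ≤ pathFallStep y v' :=
  card_le_card <| monotone_filter_right _ fun _ _ hm => h.trans hm

theorem IsLPath.pathFallStep_lt_iff (hy : IsLPath n y) {v : ℕ} (hv : v ≤ y 0)
    (m : Fin (n + 1)) : pathFallStep y v < m ↔ (y m : ℕ) < v := by
  induction m using Fin.cases with
  | zero => simpa using hv
  | succ m =>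
    have hP : Antitone fun m : Fin n => v ≤ (y m.succ : ℕ) :=
      fun a b hab hb => hb.trans (hy.antitone (Fin.succ_le_succ_iff.2 hab))
    rw [Fin.val_succ, Nat.lt_add_one_iff, ← not_lt, pathFallStep,
      Fin.lt_card_filter_iff_of_antitone hP, not_le]

theorem IsLPath.exists_fall_at_pathFallStep (hy : IsLPath n y) {v : ℕ} (h0 : v ≤ y 0)
    (hn : (y (Fin.last n) : ℕ) < v) :
    ∃ k : Fin n, (k : ℕ) = pathFallStep y v ∧ (y k.castSucc : ℕ) = v ∧ n ≤ k + v := by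
  have hlt : pathFallStep y v < n := by
    simpa using (hy.pathFallStep_lt_iff h0 (Fin.last n)).2 hn
  set k : Fin n := ⟨pathFallStep y v, hlt⟩
  have hk₀ : v ≤ y k.castSucc :=
    not_lt.1 fun h => lt_irrefl _ ((hy.pathFallStep_lt_iff h0 _).2 h)
  have hk₁ : (y k.succ : ℕ) < v := (hy.pathFallStep_lt_iff h0 _).1 (by simp [k])
  rcases (hy k).1 with h | h
  · rw [h] at hk₁
    omega
  · have := (hy k).2 h
    exact ⟨k, rfl, by omega, by omega⟩

theorem IsLPath.pathFallStep_add_le (hy : IsLPath n y) {v v' : ℕ} (hv : v' ≤ v) (h0 : v ≤ y 0)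
    (hn : (y (Fin.last n) : ℕ) < v') : pathFallStep y v + v ≤ pathFallStep y v' + v' := by
  obtain ⟨k, hk, hyk, -⟩ := hy.exists_fall_at_pathFallStep h0 (hn.trans_le hv)
  obtain ⟨k', hk', hyk', -⟩ := hy.exists_fall_at_pathFallStep (hv.trans h0) hn
  have := hy.monotone_val_add (a := k.castSucc) (b := k'.castSucc)
    (by rw [Fin.le_iff_val_le_val, Fin.val_castSucc, Fin.val_castSucc, hk, hk']
        exact pathFallStep_mono hv)
  simp only [Fin.val_castSucc, hyk, hyk', hk, hk'] at this
  omega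

/-- The sequence read off the fall steps of a path from height `i`: the fall from height `i - q`
at step `k` contributes the second index `k + (i - q) - n` of its weight. -/
def seqOfPath {d : ℕ} (n i : ℕ) (y : Fin (n + 1) → Fin (n + 1)) : Fin d → Fin (i + 1) :=
  fun q => ⟨pathFallStep y (i - q) + (i - q) - n,
    by have := pathFallStep_le (y := y) (i - q); omega⟩

variable {i j : Fin (n + 1)}

theorem seqOfPath_mem_QIset (hy : IsLPath n y) (h0 : y 0 = i) (hn : y (Fin.last n) = j) :
    seqOfPath n i y ∈ QIset i j := by
  have hji : j ≤ i := h0 ▸ hn ▸ hy.antitone (Fin.zero_le _)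
  refine mem_QIset.2 ⟨hji, fun q q' hqq' => ?_, fun q => ?_⟩
  · have : (q : ℕ) ≤ q' := hqq'
    have := q'.isLt
    have := hy.pathFallStep_add_le (v := i - q) (v' := i - q') (by omega) (by rw [h0]; omega)
      (by rw [hn]; omega)
    simp only [seqOfPath, Fin.mk_le_mk]
    omega
  · have := q.isLt
    obtain ⟨k, hk, -⟩ := hy.exists_fall_at_pathFallStep (v := i - q) (by rw [h0]; omega)
      (by rw [hn]; omega)
    have := k.isLt
    simp only [seqOfPath]
    omega

end PathToSeq

section Inverse

variable {n d : ℕ} {i j : Fin (n + 1)}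

theorem pathFallStep_pathOfSeq {α : Fin d → Fin (i + 1)} (hα : Monotone α)
    (hb : ∀ q, (α q : ℕ) + q < i) (q : Fin d) :
    pathFallStep (pathOfSeq i α) (i - q) = seqFallStep n i α q := by
  refine Fin.card_filter_eq_of_iff (seqFallStep_lt hb q).le fun m => ?_
  have hP : Antitone fun q' => seqFallStep n i α q' < m + 1 :=
    fun _ _ hab h => ((seqFallStep_strictMono hα).monotone hab).trans_lt h
  have := Fin.lt_card_filter_iff_of_antitone hP q
  have := hb q
  simp only [pathOfSeq, Fin.val_succ]
  omega

theorem seqOfPath_pathOfSeq {α : Fin d → Fin (i + 1)} (hα : Monotone α)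
    (hb : ∀ q, (α q : ℕ) + q < i) : seqOfPath n i (pathOfSeq i α) = α := by
  funext q
  have := hb q
  have := i.isLt
  ext
  simp only [seqOfPath, pathFallStep_pathOfSeq hα hb, seqFallStep]
  omega

theorem pathOfSeq_seqOfPath {y : Fin (n + 1) → Fin (n + 1)} (hy : IsLPath n y) (h0 : y 0 = i)
    (hn : y (Fin.last n) = j) : pathOfSeq i (seqOfPath (d := i - j) n i y) = y := by
  have hfall (q : Fin (i - j)) :
      seqFallStep n i (seqOfPath n i y) q = pathFallStep y (i - q) := by
    have := q.isLt
    obtain ⟨k, hk, -, hkv⟩ := hy.exists_fall_at_pathFallStep (v := i - q) (by rw [h0]; omega)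
      (by rw [hn]; omega)
    simp only [seqFallStep, seqOfPath]
    omega
  funext m
  have hi : (y m : ℕ) ≤ i := h0 ▸ hy.antitone (Fin.zero_le m)
  have hj : (j : ℕ) ≤ y m := hn ▸ hy.antitone (Fin.le_last m)
  ext
  simp only [pathOfSeq]
  rw [Fin.card_filter_eq_of_iff (c := i - y m) (by omega) fun q => by
    rw [hfall, hy.pathFallStep_lt_iff (by rw [h0]; omega)]
    omega]
  omega

end Inverse

def QIsetEquivLPaths (n : ℕ) (i j : Fin (n + 1)) :
    {α // α ∈ QIset i j} ≃
      {y : Fin (n + 1) → Fin (n + 1) // IsLPath n y ∧ y 0 = i ∧ y (Fin.last n) = j} where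
  toFun α := ⟨pathOfSeq i α.1, isLPath_pathOfSeq (mem_QIset.1 α.2).2.1 (mem_QIset.1 α.2).2.2,
    pathOfSeq_zero, Fin.ext <| by
      rw [pathOfSeq_last (mem_QIset.1 α.2).2.2, Nat.sub_sub_self (mem_QIset.1 α.2).1]⟩
  invFun y := ⟨seqOfPath n i y.1, seqOfPath_mem_QIset y.2.1 y.2.2.1 y.2.2.2⟩
  left_inv α := Subtype.ext <| seqOfPath_pathOfSeq (mem_QIset.1 α.2).2.1 (mem_QIset.1 α.2).2.2
  right_inv y := Subtype.ext <| pathOfSeq_seqOfPath y.2.1 y.2.2.1 y.2.2.2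

/-- The paper's factor for `r ∈ [j, i)` is the factor for `q = i - r - 1` here. -/
theorem stmt8 {R : Type*} [CommRing R] (n : ℕ) (t : ℕ → ℕ → R) (i j : Fin (n + 1)) :
    ∃ f : {α // α ∈ QIset (i : ℕ) (j : ℕ)} ≃
        {y : Fin (n + 1) → Fin (n + 1) // IsLPath n y ∧ y 0 = i ∧ y (Fin.last n) = j},
      ∀ α, lweight n t (f α).1 =
        ∏ q : Fin ((i : ℕ) - (j : ℕ)), t ((i : ℕ) - (q : ℕ)) (α.1 q : ℕ) :=
  ⟨QIsetEquivLPaths n i j, fun α =>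
    lweight_pathOfSeq t (mem_QIset.1 α.2).2.1 (mem_QIset.1 α.2).2.2⟩
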